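/- Let θ be a Borel probability measure on S^m. The map ω ↦ θ(ω), restricted to the space of nonempty compact spherically convex subsets of S^m with the Hausdorff metric, is continuous at every ω with θ(∂ω) = 0. -/

import Mathlib

open MeasureTheory Metric Set Real
open scoped ENNReal

noncomputable section

abbrev Euc (m : ℕ) : Type := EuclideanSpace ℝ (Fin (m + 1))

abbrev Sph (m : ℕ) : Type := Metric.sphere (0 : Euc m) 1

/-- geodesic distance on the sphere -/
def gdist {m : ℕ} (n x : Sph m) : ℝ :=
  Real.arccos (inner ℝ (n : Euc m) (x : Euc m))

/-- the logarithmic cost, with values in `[0,∞]` -/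
def cost {m : ℕ} (n x : Sph m) : ℝ≥0∞ :=
  if 0 < (inner ℝ (n : Euc m) (x : Euc m) : ℝ) then
    ENNReal.ofReal (-Real.log (inner ℝ (n : Euc m) (x : Euc m))) else ∞

/-- the uniform probability measure on the sphere -/
def unif (m : ℕ) : Measure (Sph m) :=
  ((volume : Measure (Euc m)).toSphere Set.univ)⁻¹ • (volume : Measure (Euc m)).toSphere

/-- the radial function of a set with respect to the origin -/
def radial {m : ℕ} (Ω : Set (Euc m)) (x : Sph m) : ℝ :=
  sSup {s : ℝ | 0 ≤ s ∧ s • (x : Euc m) ∈ Ω}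

/-- the Euclidean cone generated by a subset of the sphere -/
def cone {m : ℕ} (A : Set (Sph m)) : Set (Euc m) :=
  {y | ∃ r : ℝ, 0 ≤ r ∧ ∃ x ∈ A, y = r • (x : Euc m)}

/-- a subset of the sphere is spherically convex if the cone it generates is convex -/
def SphConvex {m : ℕ} (A : Set (Sph m)) : Prop := Convex ℝ (cone A)

/-- open `r`-neighbourhood for the geodesic distance -/
def nbhd {m : ℕ} (V : Set (Sph m)) (r : ℝ) : Set (Sph m) :=
  {y | ∃ x ∈ V, gdist y x < r}

/-- the spherical polar set -/
def spolar {m : ℕ} (ω : Set (Sph m)) : Set (Sph m) :=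
  {y | ∀ x ∈ ω, (inner ℝ (y : Euc m) (x : Euc m) : ℝ) ≤ 0}

/-- the support function of a star-shaped set -/
def suppFn {m : ℕ} (F : Set (Euc m)) (n : Sph m) : ℝ :=
  ⨆ x : Sph m, radial F x * (inner ℝ (x : Euc m) (n : Euc m) : ℝ)

/-- the polar set in Euclidean space -/
def polar {m : ℕ} (F : Set (Euc m)) : Set (Euc m) :=
  {n | ∀ x ∈ F, (inner ℝ x n : ℝ) ≤ 1}

/-- the logarithmic cost, with values in `ℝ ∪ {±∞}` -/
def costE {m : ℕ} (n x : Sph m) : EReal :=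
  if 0 < (inner ℝ (n : Euc m) (x : Euc m) : ℝ) then
    ((-Real.log (inner ℝ (n : Euc m) (x : Euc m)) : ℝ) : EReal) else ⊤
/-! Upper semicontinuity of `K ↦ θ K` holds on all nonempty compact sets: a set Hausdorff-close
to `ω` lies in a thin thickening of `ω`, whose measure tends to `θ ω`. For lower semicontinuity,
`θ ω = θ (interior ω)` is approximated by the measure of the points `x` whose closed `r`-ball lies
in `ω`. Such an `x` belongs to every spherically convex `K` that is Hausdorff-close to `ω`:
otherwise a hyperplane through the origin separates `x` from `K`, and pushing `x` by `r/2` across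
it gives a point of `ω` at distance at least `r/4` from `K`. -/

open Filter Topology
open scoped RealInnerProductSpace

section NonemptyCompacts

variable {α : Type*} [MetricSpace α]

lemma TopologicalSpace.NonemptyCompacts.hausdorffEDist_ne_top
    (K L : TopologicalSpace.NonemptyCompacts α) : hausdorffEDist (K : Set α) L ≠ ⊤ :=
  hausdorffEDist_ne_top_of_nonempty_of_bounded K.nonempty L.nonempty
    K.isCompact.isBounded L.isCompact.isBounded

lemma TopologicalSpace.NonemptyCompacts.subset_thickening_of_dist_lt
    {K L : TopologicalSpace.NonemptyCompacts α} {δ : ℝ} (h : dist K L < δ) :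
    (K : Set α) ⊆ thickening δ L := fun _ hx ↦
  mem_thickening_iff.2 <| exists_dist_lt_of_hausdorffDist_lt hx h (K.hausdorffEDist_ne_top L)

theorem TopologicalSpace.NonemptyCompacts.upperSemicontinuous_measure [MeasurableSpace α]
    [OpensMeasurableSpace α] (μ : Measure α) [IsFiniteMeasure μ] :
    UpperSemicontinuous fun K : TopologicalSpace.NonemptyCompacts α ↦ μ K := by
  intro L y hy
  have hlim := tendsto_measure_thickening_of_isClosed (μ := μ)
    ⟨1, one_pos, measure_ne_top μ _⟩ L.isCompact.isClosed
  obtain ⟨δ, hδy, hδ⟩ := ((hlim.eventually_lt_const hy).and self_mem_nhdsWithin).exists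
  filter_upwards [ball_mem_nhds L hδ] with K hK
  exact (measure_mono (subset_thickening_of_dist_lt hK)).trans_lt hδy

end NonemptyCompacts

lemma exists_lt_measure_setOf_closedBall_subset {α : Type*} [PseudoMetricSpace α]
    [MeasurableSpace α] (μ : Measure α) {s : Set α} {y : ℝ≥0∞} (hy : y < μ (interior s)) :
    ∃ r > 0, y < μ {x | closedBall x r ⊆ s} := by
  set S : ℕ → Set α := fun n ↦ {x | closedBall x (1 / (n + 1)) ⊆ s}
  have hS : Monotone S := fun a b hab x hx ↦
    (closedBall_subset_closedBall (Nat.one_div_le_one_div hab)).trans hx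
  have hcover : interior s ⊆ ⋃ n, S n := by
    intro x hx
    obtain ⟨ε, hε, hεs⟩ := nhds_basis_closedBall.mem_iff.1 (mem_interior_iff_mem_nhds.1 hx)
    obtain ⟨n, hn⟩ := exists_nat_one_div_lt hε
    exact mem_iUnion.2 ⟨n, (closedBall_subset_closedBall hn.le).trans hεs⟩
  obtain ⟨n, hn⟩ := lt_iSup_iff.1 <|
    hy.trans_le ((measure_mono hcover).trans_eq hS.measure_iUnion)
  exact ⟨1 / (n + 1), Nat.one_div_pos_of_nat, hn⟩

section Sphere

variable {m : ℕ}

lemma norm_coe_sph (x : Sph m) : ‖(x : Euc m)‖ = 1 := norm_eq_of_mem_sphere x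

lemma smul_mem_cone {K : Set (Sph m)} {r : ℝ} (hr : 0 ≤ r) {y : Euc m} (hy : y ∈ cone K) :
    r • y ∈ cone K := by
  obtain ⟨t, ht, x, hx, rfl⟩ := hy
  exact ⟨r * t, mul_nonneg hr ht, x, hx, (mul_smul r t _).symm⟩

lemma mem_of_coe_mem_cone {K : Set (Sph m)} {x : Sph m} (hx : (x : Euc m) ∈ cone K) : x ∈ K := by
  obtain ⟨r, hr, y, hy, hxy⟩ := hx
  have hr1 : r = 1 := by
    simpa [norm_coe_sph, norm_smul, abs_of_nonneg hr] using congrArg norm hxy.symm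
  rwa [Subtype.ext (hxy.trans (by rw [hr1, one_smul]))]

lemma IsCompact.isClosed_cone {K : Set (Sph m)} (hK : IsCompact K) : IsClosed (cone K) := by
  refine isClosed_of_closure_subset fun z hz ↦ ?_
  obtain ⟨w, hw, hwz⟩ := mem_closure_iff_seq_limit.1 hz
  choose r hr x hx hwx using hw
  obtain ⟨y, hy, φ, hφ, hxy⟩ := hK.tendsto_subseq hx
  have hnorm : ∀ n, ‖w n‖ = r n := fun n ↦ by
    rw [hwx, norm_smul, norm_coe_sph, mul_one, Real.norm_of_nonneg (hr n)]
  have hlim : Tendsto (fun n ↦ ‖w (φ n)‖ • (x (φ n) : Euc m)) atTop (𝓝 (‖z‖ • (y : Euc m))) :=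
    (hwz.comp hφ.tendsto_atTop).norm.smul ((continuous_subtype_val.tendsto y).comp hxy)
  simp only [hnorm, ← hwx] at hlim
  exact ⟨‖z‖, norm_nonneg z, y, hy, tendsto_nhds_unique (hwz.comp hφ.tendsto_atTop) hlim⟩

def SphConvex.toProperCone {K : Set (Sph m)} (hKc : SphConvex K) (hK : IsCompact K)
    (hne : K.Nonempty) : ProperCone ℝ (Euc m) where
  carrier := cone K
  add_mem' {a b} ha hb := by
    have hmid := hKc ha hb (by norm_num : (0 : ℝ) ≤ 1 / 2) (by norm_num : (0 : ℝ) ≤ 1 / 2)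
      (by norm_num)
    convert smul_mem_cone zero_le_two hmid using 1
    module
  zero_mem' := let ⟨x, hx⟩ := hne; ⟨0, le_rfl, x, hx, (zero_smul ℝ _).symm⟩
  smul_mem' c _ hy := smul_mem_cone c.2 hy
  isClosed' := hK.isClosed_cone

lemma SphConvex.exists_separating_of_notMem {K : Set (Sph m)} (hKc : SphConvex K)
    (hK : IsCompact K) (hne : K.Nonempty) {x : Sph m} (hx : x ∉ K) :
    ∃ u : Euc m, ‖u‖ = 1 ∧ 0 < ⟪(x : Euc m), u⟫ ∧ ∀ y ∈ K, ⟪(y : Euc m), u⟫ ≤ 0 := by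
  obtain ⟨v, hvK, hvx⟩ := (hKc.toProperCone hK hne).hyperplane_separation'
    (x₀ := (x : Euc m)) fun h ↦ hx (mem_of_coe_mem_cone h)
  have hv : v ≠ 0 := by rintro rfl; simp at hvx
  have hv' : 0 < ‖v‖⁻¹ := inv_pos.2 (norm_pos_iff.2 hv)
  refine ⟨-(‖v‖⁻¹ • v), by simpa using norm_smul_inv_norm (𝕜 := ℝ) hv, ?_, fun y hy ↦ ?_⟩
  · rw [inner_neg_right, real_inner_smul_right]
    exact neg_pos.2 (mul_neg_of_pos_of_neg hv' hvx)
  · rw [inner_neg_right, real_inner_smul_right]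
    exact neg_nonpos.2 (mul_nonneg hv'.le (hvK _ ⟨1, zero_le_one, y, hy, (one_smul ℝ _).symm⟩))

lemma exists_dist_le_and_half_le_inner (x : Sph m) {u : Euc m} (hu : ‖u‖ = 1)
    (hxu : 0 ≤ ⟪(x : Euc m), u⟫) {s : ℝ} (hs : 0 < s) (hs1 : s ≤ 1) :
    ∃ z : Sph m, dist z x ≤ 2 * s ∧ s / 2 ≤ ⟪(z : Euc m), u⟫ := by
  set w : Euc m := x + s • u with hw
  have hsu : ‖s • u‖ = s := by rw [norm_smul, hu, mul_one, Real.norm_of_nonneg hs.le]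
  have hwu : ⟪w, u⟫ = ⟪(x : Euc m), u⟫ + s := by
    rw [inner_add_left, real_inner_smul_left, real_inner_self_eq_norm_sq, hu]; ring
  have hw_ge_s : s ≤ ‖w‖ := by
    have := real_inner_le_norm w u
    rw [hu, mul_one] at this
    linarith
  have hw_le : ‖w‖ ≤ 1 + s := (norm_add_le _ _).trans_eq (by rw [norm_coe_sph, hsu])
  have hw_ge : 1 - s ≤ ‖w‖ := by
    have := norm_sub_le w (s • u)
    rw [hw, add_sub_cancel_right, norm_coe_sph, hsu] at this
    linarith
  have hw0 : w ≠ 0 := norm_pos_iff.1 (hs.trans_le hw_ge_s)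
  refine ⟨⟨‖w‖⁻¹ • w, by simpa using norm_smul_inv_norm (𝕜 := ℝ) hw0⟩, ?_, ?_⟩
  · have hscale : ‖(‖w‖⁻¹ - 1) • w‖ = |1 - ‖w‖| := by
      rw [norm_smul, Real.norm_eq_abs, ← abs_norm w, ← abs_mul, abs_norm]
      field_simp
    have hdev : |1 - ‖w‖| ≤ s := abs_le.2 ⟨by linarith, by linarith⟩
    rw [Subtype.dist_eq, dist_eq_norm]
    calc ‖‖w‖⁻¹ • w - x‖ = ‖(‖w‖⁻¹ - 1) • w + s • u‖ := by rw [hw]; congr 1; module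
      _ ≤ |1 - ‖w‖| + s := (norm_add_le _ _).trans_eq (by rw [hscale, hsu])
      _ ≤ 2 * s := by linarith
  · change s / 2 ≤ ⟪‖w‖⁻¹ • w, u⟫
    rw [real_inner_smul_left, hwu, ← div_eq_inv_mul, le_div_iff₀ (hs.trans_le hw_ge_s)]
    nlinarith

lemma SphConvex.mem_of_closedBall_subset {K W : Set (Sph m)} (hKc : SphConvex K)
    (hK : IsCompact K) (hne : K.Nonempty) (hfin : hausdorffEDist W K ≠ ⊤) {s : ℝ} (hs : 0 < s)
    (hs1 : s ≤ 1) (hd : hausdorffDist W K < s / 2) {x : Sph m} (hx : closedBall x (2 * s) ⊆ W) :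
    x ∈ K := by
  by_contra hxK
  obtain ⟨u, hu, hxu, huK⟩ := hKc.exists_separating_of_notMem hK hne hxK
  obtain ⟨z, hzx, hzu⟩ := exists_dist_le_and_half_le_inner x hu hxu.le hs hs1
  obtain ⟨y, hy, hzy⟩ := exists_dist_lt_of_hausdorffDist_lt (hx (mem_closedBall.2 hzx)) hd hfin
  have hzy' : ⟪(z : Euc m), u⟫ ≤ dist z y :=
    calc ⟪(z : Euc m), u⟫ ≤ ⟪(z : Euc m) - y, u⟫ := by rw [inner_sub_left]; linarith [huK y hy]
      _ ≤ ‖(z : Euc m) - y‖ * ‖u‖ := real_inner_le_norm _ _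
      _ = dist z y := by rw [hu, mul_one, Subtype.dist_eq, dist_eq_norm]
  linarith

theorem lowerSemicontinuousAt_measure_sphConvex_of_null_frontier (θ : Measure (Sph m))
    (ω : {K : TopologicalSpace.NonemptyCompacts (Sph m) // SphConvex (K : Set (Sph m))})
    (hfr : θ (frontier (ω.1 : Set (Sph m))) = 0) :
    LowerSemicontinuousAt
      (fun K : {K : TopologicalSpace.NonemptyCompacts (Sph m) //
          SphConvex (K : Set (Sph m))} ↦ θ (K.1 : Set (Sph m))) ω := by
  intro y hy
  have hy : y < θ (interior (ω.1 : Set (Sph m))) := by rwa [measure_interior_of_null_frontier hfr]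
  obtain ⟨r, hr, hry⟩ := exists_lt_measure_setOf_closedBall_subset θ hy
  obtain ⟨s, hs, hs1, h2s⟩ : ∃ s : ℝ, 0 < s ∧ s ≤ 1 ∧ 2 * s ≤ r :=
    ⟨min r 1 / 2, by positivity, by linarith [min_le_right r 1], by linarith [min_le_left r 1]⟩
  filter_upwards [ball_mem_nhds ω (half_pos hs)] with K hK
  refine hry.trans_le (measure_mono fun x hx ↦ ?_)
  rw [mem_ball, Subtype.dist_eq, NonemptyCompacts.dist_eq, hausdorffDist_comm] at hK
  exact K.2.mem_of_closedBall_subset K.1.isCompact K.1.nonempty (ω.1.hausdorffEDist_ne_top K.1)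
    hs hs1 hK ((closedBall_subset_closedBall h2s).trans hx)

end Sphere

/-- on spherically convex sets, `ω ↦ θ ω` is continuous at every `ω`
with `θ (∂ω) = 0`. -/
theorem measure_continuousAt_of_null_frontier (m : ℕ) (θ : Measure (Sph m))
    [IsProbabilityMeasure θ]
    (ω : {K : TopologicalSpace.NonemptyCompacts (Sph m) // SphConvex (K : Set (Sph m))})
    (hfr : θ (frontier (ω.1 : Set (Sph m))) = 0) :
    ContinuousAt
      (fun K : {K : TopologicalSpace.NonemptyCompacts (Sph m) //
          SphConvex (K : Set (Sph m))} => θ (K.1 : Set (Sph m))) ω :=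
  continuousAt_iff_lower_upperSemicontinuousAt.2
    ⟨lowerSemicontinuousAt_measure_sphConvex_of_null_frontier θ ω hfr,
      (TopologicalSpace.NonemptyCompacts.upperSemicontinuous_measure θ ω.1).comp
        continuous_subtype_val.continuousAt⟩
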